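/- Let C be a top-connected set of relations, X a C-pattern in P_C^+(λ,μ) whose tiling has at least one Λ1-free tile. Then the dimension of the minimal face of P_C^+(λ,μ) containing X equals the dimension of the kernel of the tiling matrix A_{M_C(X)}. -/

import Mathlib

open scoped BigOperators

namespace GT

/-- Index set 𝔙 = {(i,j) : 1 ≤ j ≤ i ≤ n}, encoded 0-based:
`p.val.1` is the (0-based) row, `p.val.2` the (0-based) column. -/
abbrev Idx (n : ℕ) := {p : Fin n × Fin n // p.2 ≤ p.1}

/-- Points of ℝ^{n(n+1)/2}, entries indexed by `Idx n`. -/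
abbrev Pattern (n : ℕ) := Idx n → ℝ

/-- A set of relations is a set of pairs of indices. -/
abbrev Rels (n : ℕ) := Set (Idx n × Idx n)

/-- `X` is a `C`-pattern iff `x_{ij} ≥ x_{rs}` for all `((i,j);(r,s)) ∈ C`. -/
def IsPattern {n : ℕ} (C : Rels n) (X : Pattern n) : Prop :=
  ∀ pr ∈ C, X pr.2 ≤ X pr.1

/-- The polyhedron `P_C` of all `C`-patterns. -/
def PC {n : ℕ} (C : Rels n) : Set (Pattern n) := {X | IsPattern C X}

/-- 0-based row of a vertex; paper row `i` corresponds to `row p = i - 1`,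
so the top row (paper row `n`) is `row p = n - 1`. -/
def row {n : ℕ} (p : Idx n) : ℕ := p.val.1.val

/-- `P_C(λ)` : `C`-patterns whose top row equals `λ`. -/
def PCl {n : ℕ} (C : Rels n) (lam : Fin n → ℝ) : Set (Pattern n) :=
  {X | IsPattern C X ∧ ∀ p : Idx n, row p = n - 1 → X p = lam p.val.2}

/-- `R_k(X) = Σ_{i=1}^k x_{ki}` (paper row `k` is 0-based row `k-1`). -/
def Rk {n : ℕ} (X : Pattern n) (k : Fin n) : ℝ :=
  ∑ j : Fin n, if h : j ≤ k then X ⟨(k, j), h⟩ else 0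

/-- The `k`-th weight map: `w_1(X) = x_{11}` and `w_k(X) = R_k(X) - R_{k-1}(X)`. -/
def wk {n : ℕ} (X : Pattern n) (k : Fin n) : ℝ :=
  Rk X k - (if _ : 0 < k.val then
    Rk X ⟨k.val - 1, Nat.lt_of_le_of_lt (Nat.sub_le _ _) k.isLt⟩ else 0)

/-- `P_C(λ,μ)` : elements of `P_C(λ)` with weights `μ`. -/
def PClm {n : ℕ} (C : Rels n) (lam mu : Fin n → ℝ) : Set (Pattern n) :=
  {X | X ∈ PCl C lam ∧ ∀ k : Fin n, wk X k = mu k}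

/-- Edges of the (undirected) graph `G(C)` along which the entries of `X` agree. -/
def edge {n : ℕ} (C : Rels n) (X : Pattern n) (p q : Idx n) : Prop :=
  ((p, q) ∈ C ∨ (q, p) ∈ C) ∧ X p = X q

/-- `(i,j)` and `(r,s)` are in the same tile of the tiling `M_C(X)` iff they are
joined by a walk in `G(C)` along which all entries of `X` are equal. -/
def sameTile {n : ℕ} (C : Rels n) (X : Pattern n) : Idx n → Idx n → Prop :=
  Relation.EqvGen (edge C X)

/-- The tile of `M_C(X)` containing `p`. -/
def tile {n : ℕ} (C : Rels n) (X : Pattern n) (p : Idx n) : Set (Idx n) :=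
  {q | sameTile C X p q}

/-- The set of tiles of the tiling `M_C(X)`. -/
def tiles {n : ℕ} (C : Rels n) (X : Pattern n) : Set (Set (Idx n)) :=
  {T | ∃ p, T = tile C X p}

/-- A tile is `Λ₁`-free if it contains no vertex in the top row `n`. -/
def L1free {n : ℕ} (T : Set (Idx n)) : Prop := ∀ q ∈ T, row q ≠ n - 1

/-- A tile is `Λ₂`-free if it contains no vertex in row `1` nor in the top row `n`. -/
def L2free {n : ℕ} (T : Set (Idx n)) : Prop := ∀ q ∈ T, row q ≠ n - 1 ∧ row q ≠ 0

/-- `D_X(P) = {Y : X + Y ∈ P and X - Y ∈ P}`. -/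
def DX {E : Type*} [AddCommGroup E] (P : Set E) (x : E) : Set E :=
  {y | x + y ∈ P ∧ x - y ∈ P}

/-- `𝔙(C)` : vertices that are source or target of a relation of `C`. -/
def VC {n : ℕ} (C : Rels n) : Set (Idx n) := {p | ∃ q, (p, q) ∈ C ∨ (q, p) ∈ C}

/-- Existence of a directed path in `G(C)`, i.e. `p ⪰_C q`. -/
def pathTo {n : ℕ} (C : Rels n) : Idx n → Idx n → Prop :=
  Relation.ReflTransGen (fun p q => (p, q) ∈ C)

/-- `C` is top-connected if every vertex of `𝔙(C)` not in the top row has a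
directed path to some vertex in the top row. -/
def TopConnected {n : ℕ} (C : Rels n) : Prop :=
  ∀ p ∈ VC C, row p ≠ n - 1 → ∃ r : Idx n, row r = n - 1 ∧ pathTo C p r

/-- `𝒫⁺` : points of `𝒫` with nonnegative entries on `𝔙(C)`. -/
def Pplus {n : ℕ} (C : Rels n) (P : Set (Pattern n)) : Set (Pattern n) :=
  {X ∈ P | ∀ p ∈ VC C, 0 ≤ X p}

section Faces

variable {E : Type*} [AddCommGroup E] [Module ℝ E]

/-- A polyhedron: an intersection of finitely many closed halfspaces. -/
def IsPolyhedron (P : Set E) : Prop :=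
  ∃ (k : ℕ) (f : Fin k → E →ₗ[ℝ] ℝ) (c : Fin k → ℝ), P = {x | ∀ i, f i x ≤ c i}

/-- A face of `P`: either `P` itself, or the intersection of `P` with a
supporting hyperplane. -/
def IsFace (P F : Set E) : Prop :=
  F = P ∨ ∃ (f : E →ₗ[ℝ] ℝ) (c : ℝ), f ≠ 0 ∧ (∀ x ∈ P, f x ≤ c) ∧
    (∃ x ∈ P, f x = c) ∧ F = {x ∈ P | f x = c}

/-- The dimension of a face: the dimension of its affine span. -/
noncomputable def faceDim (F : Set E) : ℕ :=
  Module.finrank ℝ (affineSpan ℝ F).direction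

/-- `F` is the minimal face of `P` containing `x`. -/
def IsMinFace (P F : Set E) (x : E) : Prop :=
  IsFace P F ∧ x ∈ F ∧ ∀ F', IsFace P F' → x ∈ F' → F ⊆ F'

end Faces

end GT

/-!
Let `W` be the space of directions `Y` that are constant on the tiles of `X`, vanish on the top
row and have all weights zero. The minimal face `F` of `P = P_C⁺(λ,μ)` containing `X` has
direction `W`: every inequality of `P` that is tight at `X` stays tight on `F`, so points of `F`
differ from `X` by elements of `W`; conversely, for `Y ∈ W` the points `X ± tY` lie in `P` for
small `t`, since tight relations stay tight along `Y` and slack ones survive small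
perturbations. The only delicate constraint is `x ≥ 0` at a zero entry: by top-connectedness
its tile reaches the top row, where `Y` vanishes.

Sending `c` to the pattern equal to `c k` on the `k`-th `Λ₁`-free tile and to `0` elsewhere
identifies `ker A` with `W`: the row sums of that pattern are the entries of `A c`, zero weights
amount to zero row sums, and the remaining tiles meet the top row.
-/

open Filter Topology Function Matrix

namespace GT

section Faces

variable {E : Type*} [AddCommGroup E] [Module ℝ E] {P F : Set E} {x y z : E}

lemma IsFace.subset (hF : IsFace P F) : F ⊆ P := by
  rcases hF with rfl | ⟨f, c, -, -, -, rfl⟩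
  · exact subset_rfl
  · exact Set.sep_subset _ _

lemma IsFace.add_mem_of_sub_mem (hF : IsFace P F) (hx : x ∈ F) (hadd : x + z ∈ P)
    (hsub : x - z ∈ P) : x + z ∈ F := by
  rcases hF with rfl | ⟨f, c, -, hle, -, rfl⟩
  · exact hadd
  · have hsum : f (x + z) + f (x - z) = 2 * f x := by rw [map_add, map_sub]; ring
    exact ⟨hadd, by linarith [hle _ hadd, hle _ hsub, hx.2]⟩

lemma IsFace.mem_direction_of_eventually (hF : IsFace P F) (hx : x ∈ F)
    (h : ∀ᶠ t in 𝓝 (0 : ℝ), x + t • y ∈ P) : y ∈ (affineSpan ℝ F).direction := by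
  have hneg : ∀ᶠ t in 𝓝 (0 : ℝ), x + (-t) • y ∈ P :=
    (continuous_neg.tendsto' 0 0 neg_zero).eventually h
  obtain ⟨t, ht, hadd, hsub⟩ := (h.and hneg).exists_gt
  rw [neg_smul, ← sub_eq_add_neg] at hsub
  have hv := vsub_mem_vectorSpan ℝ (hF.add_mem_of_sub_mem hx hadd hsub) hx
  rw [vsub_eq_sub, add_sub_cancel_left] at hv
  rw [direction_affineSpan]
  simpa [smul_smul, ht.ne'] using Submodule.smul_mem _ t⁻¹ hv

lemma IsMinFace.apply_eq_of_le (hF : IsMinFace P F x) (f : E →ₗ[ℝ] ℝ) {c : ℝ}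
    (hP : ∀ y ∈ P, f y ≤ c) (hx : f x = c) (hy : y ∈ F) : f y = c := by
  by_cases hf : f = 0
  · subst hf
    exact hx
  · have hxP := hF.1.subset hF.2.1
    have hface : IsFace P {y ∈ P | f y = c} := Or.inr ⟨f, c, hf, hP, ⟨x, hxP, hx⟩, rfl⟩
    exact (hF.2.2 _ hface ⟨hxP, hx⟩ hy).2

end Faces

variable {n : ℕ}

def rowSum (k : Fin n) : Pattern n →ₗ[ℝ] ℝ where
  toFun X := Rk X k
  map_add' X Y := by
    simp only [Rk, ← Finset.sum_add_distrib]
    exact Finset.sum_congr rfl fun j _ => by split <;> simp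
  map_smul' r X := by
    simp only [Rk, Finset.smul_sum]
    exact Finset.sum_congr rfl fun j _ => by split <;> simp

@[simp]
lemma rowSum_apply (k : Fin n) (X : Pattern n) : rowSum k X = Rk X k := rfl

def weight (k : Fin n) : Pattern n →ₗ[ℝ] ℝ :=
  rowSum k - if h : 0 < k.val then rowSum ⟨k.val - 1, by omega⟩ else 0

@[simp]
lemma weight_apply (k : Fin n) (X : Pattern n) : weight k X = wk X k := by
  unfold weight wk
  split <;> simp

lemma forall_wk_eq_zero_iff {Y : Pattern n} : (∀ k, wk Y k = 0) ↔ ∀ k, Rk Y k = 0 := by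
  refine ⟨fun h => ?_, fun h k => by unfold wk; split <;> simp [h]⟩
  rintro ⟨k, hk⟩
  induction k with
  | zero => simpa [wk] using h ⟨0, hk⟩
  | succ k ih => simpa [wk, ih (by omega)] using h ⟨k + 1, hk⟩

lemma eq_mk_of_row_eq {p : Idx n} {k : Fin n} (h : row p = k.val) :
    p = ⟨(k, p.1.2), Fin.ext h ▸ p.2⟩ := by
  obtain ⟨⟨i, j⟩, hij⟩ := p
  obtain rfl : i = k := Fin.ext h
  rfl

lemma Rk_eq_sum_row (X : Pattern n) (k : Fin n) :
    Rk X k = ∑ p : Idx n, if row p = k.val then X p else 0 := by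
  classical
  rw [← Finset.sum_filter, Rk]
  symm
  refine Finset.sum_bij_ne_zero (fun p _ _ => p.1.2) (by simp) ?_ ?_ ?_
  · intro p hp _ q hq _ h
    simp only [Finset.mem_filter, Finset.mem_univ, true_and] at hp hq
    rw [eq_mk_of_row_eq hp, eq_mk_of_row_eq hq]
    simp [h]
  · intro j _ hj
    obtain ⟨hjk, hX⟩ := dite_ne_right_iff.1 hj
    exact ⟨⟨(k, j), hjk⟩, Finset.mem_filter.2 ⟨Finset.mem_univ _, rfl⟩, hX, rfl⟩
  · intro p hp _
    simp only [Finset.mem_filter, Finset.mem_univ, true_and] at hp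
    rw [dif_pos (Fin.ext hp ▸ p.2)]
    exact congrArg X (eq_mk_of_row_eq hp)

lemma Rk_indicator_one (S : Set (Idx n)) (k : Fin n) :
    Rk (S.indicator 1) k = ({p | row p = k.val ∧ p ∈ S}.ncard : ℝ) := by
  classical
  rw [Rk_eq_sum_row, Set.ncard_eq_toFinset_card', Set.toFinset_ofPred, ← Finset.sum_boole]
  simp [Set.indicator_apply, ite_and]

section Tiles

variable {C : Rels n} {X : Pattern n} {p q : Idx n} {T : Set (Idx n)}

lemma apply_eq_of_sameTile {Y : Pattern n} (hY : ∀ pr ∈ C, X pr.2 = X pr.1 → Y pr.2 = Y pr.1)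
    (h : sameTile C X p q) : Y p = Y q := by
  induction h with
  | rel a b hab =>
    rcases hab with ⟨hab | hba, hX⟩
    · exact (hY (a, b) hab hX.symm).symm
    · exact hY (b, a) hba hX
  | refl => rfl
  | symm _ _ _ ih => exact ih.symm
  | trans _ _ _ _ _ ih₁ ih₂ => exact ih₁.trans ih₂

lemma tile_eq_of_sameTile (h : sameTile C X p q) : tile C X p = tile C X q := by
  ext r
  exact ⟨(Relation.EqvGen.symm _ _ h).trans _ _ _, h.trans _ _ _⟩

lemma eq_tile_of_mem (hT : T ∈ tiles C X) (hp : p ∈ T) : T = tile C X p := by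
  obtain ⟨q, rfl⟩ := hT
  exact tile_eq_of_sameTile hp

lemma nonempty_of_mem_tiles (hT : T ∈ tiles C X) : T.Nonempty := by
  obtain ⟨p, rfl⟩ := hT
  exact ⟨p, Relation.EqvGen.refl p⟩

lemma mem_of_sameTile (hT : T ∈ tiles C X) (hp : p ∈ T) (hpq : sameTile C X p q) : q ∈ T := by
  rw [eq_tile_of_mem hT hp]
  exact hpq

/-- Along a directed path from a zero entry the entries of a nonnegative pattern can only
decrease, so they all vanish and the path stays inside one tile. -/
lemma exists_top_sameTile_of_eq_zero (htc : TopConnected C) (hX : X ∈ Pplus C (PC C))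
    (hp : p ∈ VC C) (h0 : X p = 0) : ∃ r, row r = n - 1 ∧ sameTile C X p r := by
  by_cases hrow : row p = n - 1
  · exact ⟨p, hrow, Relation.EqvGen.refl p⟩
  obtain ⟨r, hr, hpath⟩ := htc p hp hrow
  refine ⟨r, hr, ?_⟩
  suffices ∀ q, pathTo C p q → sameTile C X p q ∧ X q = 0 from (this r hpath).1
  intro q hq
  induction hq with
  | refl => exact ⟨Relation.EqvGen.refl p, h0⟩
  | @tail b c _ hbc ih =>
    have hc : X c = 0 := le_antisymm (ih.2 ▸ hX.1 (b, c) hbc) (hX.2 c ⟨b, Or.inr hbc⟩)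
    exact ⟨ih.1.trans _ _ _ (.rel _ _ ⟨Or.inl hbc, ih.2.trans hc.symm⟩), hc⟩

end Tiles

def tileDirections (C : Rels n) (X : Pattern n) : Submodule ℝ (Pattern n) where
  carrier := {Y | (∀ p q, sameTile C X p q → Y p = Y q) ∧ (∀ p, row p = n - 1 → Y p = 0) ∧
    ∀ k, wk Y k = 0}
  add_mem' := by
    rintro Y Z ⟨hY₁, hY₂, hY₃⟩ ⟨hZ₁, hZ₂, hZ₃⟩
    refine ⟨fun p q h => ?_, fun p hp => ?_, fun k => ?_⟩
    · simp [hY₁ p q h, hZ₁ p q h]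
    · simp [hY₂ p hp, hZ₂ p hp]
    · rw [← weight_apply, map_add]
      simp [hY₃, hZ₃]
  zero_mem' := ⟨fun _ _ _ => rfl, fun _ _ => rfl, fun k => by simp [← weight_apply]⟩
  smul_mem' := by
    rintro r Y ⟨hY₁, hY₂, hY₃⟩
    refine ⟨fun p q h => ?_, fun p hp => ?_, fun k => ?_⟩
    · simp [hY₁ p q h]
    · simp [hY₂ p hp]
    · rw [← weight_apply, map_smul]
      simp [hY₃]

section MinimalFace

variable {C : Rels n} {X Y : Pattern n} {lam mu : Fin n → ℝ} {F : Set (Pattern n)}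

lemma sub_mem_tileDirections (hF : IsMinFace (Pplus C (PClm C lam mu)) F X) {a : Pattern n}
    (ha : a ∈ F) : a - X ∈ tileDirections C X := by
  obtain ⟨⟨⟨-, ha_top⟩, ha_wk⟩, -⟩ := hF.1.subset ha
  obtain ⟨⟨⟨-, hX_top⟩, hX_wk⟩, -⟩ := hF.1.subset hF.2.1
  have hrel : ∀ pr ∈ C, X pr.2 = X pr.1 → a pr.2 = a pr.1 := fun pr hpr htight => by
    have h := hF.apply_eq_of_le (c := 0)
      ((LinearMap.proj pr.2 : Pattern n →ₗ[ℝ] ℝ) - LinearMap.proj pr.1)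
      (fun y hy => by simpa using hy.1.1.1 pr hpr) (by simp [htight]) ha
    simpa [sub_eq_zero] using h
  refine ⟨fun p q h => ?_, fun p hp => ?_, fun k => ?_⟩
  · simp [apply_eq_of_sameTile hrel h, apply_eq_of_sameTile (fun _ _ h => h) h]
  · simp [ha_top p hp, hX_top p hp]
  · rw [← weight_apply, map_sub]
    simp [ha_wk, hX_wk]

lemma eventually_add_mul_le {a b u v : ℝ} (hab : a ≤ b) (htight : a = b → u = v) :
    ∀ᶠ t in 𝓝 (0 : ℝ), a + t * u ≤ b + t * v := by
  rcases hab.eq_or_lt with rfl | hlt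
  · exact .of_forall fun t => by rw [htight rfl]
  · exact (ContinuousAt.eventually_lt (by fun_prop) (by fun_prop) (by simpa using hlt)).mono
      fun _ => le_of_lt

lemma eventually_add_smul_mem_Pplus (htc : TopConnected C) (hX : X ∈ Pplus C (PClm C lam mu))
    (hY : Y ∈ tileDirections C X) :
    ∀ᶠ t in 𝓝 (0 : ℝ), X + t • Y ∈ Pplus C (PClm C lam mu) := by
  obtain ⟨⟨⟨hXC, hX_top⟩, hX_wk⟩, hX_nonneg⟩ := hX
  obtain ⟨hY_tile, hY_top, hY_wk⟩ := hY
  have hrel : ∀ᶠ t in 𝓝 (0 : ℝ), ∀ pr ∈ C, (X + t • Y) pr.2 ≤ (X + t • Y) pr.1 :=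
    C.toFinite.eventually_all.2 fun pr hpr => eventually_add_mul_le (hXC pr hpr)
      fun h => hY_tile _ _ (.rel _ _ ⟨Or.inr hpr, h⟩)
  have hnonneg : ∀ᶠ t in 𝓝 (0 : ℝ), ∀ p ∈ VC C, 0 ≤ (X + t • Y) p :=
    (VC C).toFinite.eventually_all.2 fun p hp => by
      refine (eventually_add_mul_le (u := 0) (v := Y p) (hX_nonneg p hp) fun h => ?_).mono
        fun t => by simp
      obtain ⟨r, hr, hpr⟩ := exists_top_sameTile_of_eq_zero htc ⟨hXC, hX_nonneg⟩ hp h.symm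
      rw [hY_tile p r hpr, hY_top r hr]
  filter_upwards [hrel, hnonneg] with t hrel hnonneg
  refine ⟨⟨⟨hrel, fun p hp => ?_⟩, fun k => ?_⟩, hnonneg⟩
  · simp [hX_top p hp, hY_top p hp]
  · rw [← weight_apply, map_add, map_smul]
    simp [hX_wk, hY_wk]

theorem direction_affineSpan_eq_tileDirections (htc : TopConnected C)
    (hF : IsMinFace (Pplus C (PClm C lam mu)) F X) :
    (affineSpan ℝ F).direction = tileDirections C X := by
  refine le_antisymm ?_ fun Y hY => hF.1.mem_direction_of_eventually hF.2.1 <|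
    eventually_add_smul_mem_Pplus htc (hF.1.subset hF.2.1) hY
  rw [direction_affineSpan, vectorSpan_eq_span_vsub_set_right ℝ hF.2.1, Submodule.span_le]
  rintro _ ⟨a, ha, rfl⟩
  exact sub_mem_tileDirections hF ha

end MinimalFace

section TilingMatrix

variable {C : Rels n} {X Y : Pattern n} {s : ℕ} {M : Fin s → Set (Idx n)} {c : Fin s → ℝ}
  {p : Idx n} {k : Fin s}

noncomputable def tileVector (M : Fin s → Set (Idx n)) : (Fin s → ℝ) →ₗ[ℝ] Pattern n :=
  Fintype.linearCombination ℝ fun k => (M k).indicator 1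

lemma tileVector_apply_of_mem (hdisj : Pairwise (Disjoint on M)) (hp : p ∈ M k) :
    tileVector M c p = c k := by
  classical
  rw [tileVector, Fintype.linearCombination_apply, Finset.sum_apply,
    Finset.sum_eq_single k (fun l _ hlk => ?_) (by simp)]
  · simp [hp]
  · simp [Set.indicator_of_notMem ((hdisj hlk).notMem_of_mem_right hp)]

lemma tileVector_apply_of_forall_notMem (hp : ∀ k, p ∉ M k) : tileVector M c p = 0 := by
  simp [tileVector, Fintype.linearCombination_apply, Set.indicator_of_notMem (hp _)]

lemma Rk_tileVector (i : Fin n) :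
    Rk (tileVector M c) i = ∑ k, c k * ({p | row p = i.val ∧ p ∈ M k}.ncard : ℝ) := by
  rw [← rowSum_apply, tileVector, Fintype.linearCombination_apply, map_sum]
  simp [Rk_indicator_one]

lemma pairwise_disjoint_of_injective (hMinj : Injective M)
    (hM : ∀ k, M k ∈ tiles C X) : Pairwise (Disjoint on M) := fun k l hkl =>
  Set.disjoint_left.2 fun _ hk hl =>
    hkl (hMinj ((eq_tile_of_mem (hM k) hk).trans (eq_tile_of_mem (hM l) hl).symm))

lemma mulVec_eq_zero_iff_forall_Rk_tileVector {A : Matrix (Fin (n - 1)) (Fin s) ℝ}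
    (hA : ∀ i k, A i k = ({p : Idx n | row p = i.val ∧ p ∈ M k}.ncard : ℝ))
    (hM : ∀ k, L1free (M k)) : A *ᵥ c = 0 ↔ ∀ i, Rk (tileVector M c) i = 0 := by
  have hrow (i : Fin (n - 1)) : (A *ᵥ c) i = Rk (tileVector M c) ⟨i, by omega⟩ := by
    simp [Rk_tileVector, Matrix.mulVec, dotProduct, hA, mul_comm]
  have htop (i : Fin n) (hi : ¬ i.val < n - 1) : Rk (tileVector M c) i = 0 := by
    refine Rk_tileVector i ▸ Finset.sum_eq_zero fun k _ => ?_
    have : {p | row p = i.val ∧ p ∈ M k} = ∅ :=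
      Set.eq_empty_of_forall_notMem fun p hp => hM k p hp.2 (by rw [hp.1]; omega)
    simp [this]
  refine ⟨fun h i => ?_, fun h => funext fun i => (hrow i).trans (h _)⟩
  by_cases hi : i.val < n - 1
  · simpa [h] using (hrow ⟨i, hi⟩).symm
  · exact htop i hi

lemma tileVector_injective (hdisj : Pairwise (Disjoint on M)) (hne : ∀ k, (M k).Nonempty) :
    Injective (tileVector M) := fun c d h => funext fun k => by
  obtain ⟨p, hp⟩ := hne k
  simpa [tileVector_apply_of_mem hdisj hp] using congrFun h p

/-- A tile that is not among the `M k` is not `Λ₁`-free, so it meets the top row, where every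
direction vanishes. -/
lemma exists_tileVector_eq (hdisj : Pairwise (Disjoint on M)) (hM : ∀ k, M k ∈ tiles C X)
    (hMall : ∀ T ∈ tiles C X, L1free T → ∃ k, T = M k) (hY : Y ∈ tileDirections C X) :
    ∃ c, tileVector M c = Y := by
  choose pt hpt using fun k => nonempty_of_mem_tiles (hM k)
  refine ⟨fun k => Y (pt k), funext fun p => ?_⟩
  by_cases hp : ∃ k, p ∈ M k
  · obtain ⟨k, hk⟩ := hp
    rw [tileVector_apply_of_mem hdisj hk]
    rw [eq_tile_of_mem (hM k) (hpt k)] at hk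
    exact hY.1 _ _ hk
  · push Not at hp
    obtain ⟨r, hr, htop⟩ : ∃ r ∈ tile C X p, row r = n - 1 := by
      by_contra! h
      obtain ⟨k, hk⟩ := hMall _ ⟨p, rfl⟩ h
      exact hp k (hk ▸ Relation.EqvGen.refl p)
    rw [tileVector_apply_of_forall_notMem hp, hY.1 p r hr, hY.2.1 r htop]

theorem tileDirections_eq_map_ker {A : Matrix (Fin (n - 1)) (Fin s) ℝ}
    (hMinj : Injective M) (hM : ∀ k, M k ∈ tiles C X ∧ L1free (M k))
    (hMall : ∀ T ∈ tiles C X, L1free T → ∃ k, T = M k)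
    (hA : ∀ i k, A i k = ({p : Idx n | row p = i.val ∧ p ∈ M k}.ncard : ℝ)) :
    tileDirections C X = (LinearMap.ker A.mulVecLin).map (tileVector M) := by
  have hdisj := pairwise_disjoint_of_injective hMinj fun k => (hM k).1
  have hker (c : Fin s → ℝ) :
      c ∈ LinearMap.ker A.mulVecLin ↔ ∀ k, wk (tileVector M c) k = 0 := by
    rw [LinearMap.mem_ker, mulVecLin_apply, mulVec_eq_zero_iff_forall_Rk_tileVector hA fun k => (hM k).2,
      forall_wk_eq_zero_iff]
  ext Y
  constructor
  · intro hY
    obtain ⟨c, rfl⟩ := exists_tileVector_eq hdisj (fun k => (hM k).1) hMall hY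
    exact ⟨c, (hker c).2 hY.2.2, rfl⟩
  · rintro ⟨c, hc, rfl⟩
    refine ⟨fun p q h => ?_, fun p hp => ?_, (hker c).1 hc⟩
    · by_cases hp : ∃ k, p ∈ M k
      · obtain ⟨k, hk⟩ := hp
        rw [tileVector_apply_of_mem hdisj hk,
          tileVector_apply_of_mem hdisj (mem_of_sameTile (hM k).1 hk h)]
      · push Not at hp
        have hq (k : Fin s) : q ∉ M k := fun hq => hp k (mem_of_sameTile (hM k).1 hq h.symm)
        rw [tileVector_apply_of_forall_notMem hp, tileVector_apply_of_forall_notMem hq]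
    · exact tileVector_apply_of_forall_notMem fun k hk => (hM k).2 p hk hp

end TilingMatrix

end GT

theorem stmt16_general {n : ℕ} (C : GT.Rels n) (htc : GT.TopConnected C)
    (X : GT.Pattern n) (lam mu : Fin n → ℝ)
    (s : ℕ) (M : Fin s → Set (GT.Idx n)) (hMinj : Function.Injective M)
    (hM : ∀ k, M k ∈ GT.tiles C X ∧ GT.L1free (M k))
    (hMall : ∀ T ∈ GT.tiles C X, GT.L1free T → ∃ k, T = M k)
    (A : Matrix (Fin (n - 1)) (Fin s) ℝ)
    (hA : ∀ i k, A i k = ({p : GT.Idx n | GT.row p = i.val ∧ p ∈ M k}.ncard : ℝ))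
    (F : Set (GT.Pattern n))
    (hF : GT.IsMinFace (GT.Pplus C (GT.PClm C lam mu)) F X) :
    GT.faceDim F = Module.finrank ℝ (LinearMap.ker A.mulVecLin) := by
  have hinj : Function.Injective (GT.tileVector M) :=
    GT.tileVector_injective (GT.pairwise_disjoint_of_injective hMinj fun k => (hM k).1)
      fun k => GT.nonempty_of_mem_tiles (hM k).1
  rw [GT.faceDim, GT.direction_affineSpan_eq_tileDirections htc hF,
    GT.tileDirections_eq_map_ker hMinj hM hMall hA]
  exact (Submodule.equivMapOfInjective _ hinj _).finrank_eq.symm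

/-- for a top-connected `C` and `X ∈ P_C⁺(λ,μ)` whose tiling has
at least one `Λ₁`-free tile, the dimension of the minimal face of `P_C⁺(λ,μ)`
containing `X` equals the dimension of the kernel of the tiling matrix. -/
theorem stmt16 {n : ℕ} (C : GT.Rels n) (htc : GT.TopConnected C)
    (X : GT.Pattern n) (lam mu : Fin n → ℝ)
    (hX : X ∈ GT.Pplus C (GT.PClm C lam mu))
    (hlam : ∀ p : GT.Idx n, GT.row p = n - 1 → X p = lam p.val.2)
    (hmu : ∀ k : Fin n, GT.wk X k = mu k)
    (s : ℕ) (hs : 0 < s) (M : Fin s → Set (GT.Idx n)) (hMinj : Function.Injective M)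
    (hM : ∀ k, M k ∈ GT.tiles C X ∧ GT.L1free (M k))
    (hMall : ∀ T ∈ GT.tiles C X, GT.L1free T → ∃ k, T = M k)
    (A : Matrix (Fin (n - 1)) (Fin s) ℝ)
    (hA : ∀ i k, A i k = ({p : GT.Idx n | GT.row p = i.val ∧ p ∈ M k}.ncard : ℝ))
    (F : Set (GT.Pattern n))
    (hF : GT.IsMinFace (GT.Pplus C (GT.PClm C lam mu)) F X) :
    GT.faceDim F = Module.finrank ℝ (LinearMap.ker A.mulVecLin) :=
  stmt16_general C htc X lam mu s M hMinj hM hMall A hA F hF
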